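/- arXiv:2402.02793 — 9 statements merged into one kernel-verified Lean document; each statement's English description precedes it below -/
import Mathlib

section
/- For all real numbers k, γ, α, the determinant of the matrix Y(γ,α) satisfies det Y(γ,α) = (k+1)²·sin²(πγ) − (k−1)²·sin²(γ(α−π)). -/
/-- The 4×4 matrix `Y(γ,α)` (with conductivity parameter `k`) encoding the
transmission conditions of the corner eigenvalue problem. -/
noncomputable def cornerMatrix (k γ α : ℝ) : Matrix (Fin 4) (Fin 4) ℝ :=
  !![1, 0, -Real.cos (2 * Real.pi * γ), -Real.sin (2 * Real.pi * γ);
     0, k, Real.sin (2 * Real.pi * γ), -Real.cos (2 * Real.pi * γ);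
     Real.cos (γ * α), Real.sin (γ * α), -Real.cos (γ * α), -Real.sin (γ * α);
     -(k * Real.sin (γ * α)), k * Real.cos (γ * α), Real.sin (γ * α), -Real.cos (γ * α)]

/-!
With `D = diag(1, k)` and `Q t` the rotation matrix below, `Y` is the block matrix
`[[D, -Q (2πγ)], [D * Q (γα), -Q (γα)]]`. Taking the Schur complement of the rotation block
`-Q (γα)` leaves the 2×2 determinant of `D - Q (b - a) * D * Q (b + a)` with `b = πγ` and
`a = γ(α - π)`. It equals `2k + (1 + k²) sin(b - a) sin(b + a) - 2k cos(b - a) cos(b + a)`,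
and the product formulas for `sin(b ∓ a)` and `cos(b ∓ a)` turn this into
`(k + 1)² sin² b - (k - 1)² sin² a`.
-/

open Matrix Real

-- The rotation by `-t`: this orientation matches the blocks of `cornerMatrix`.
noncomputable def rotationMatrix (t : ℝ) : Matrix (Fin 2) (Fin 2) ℝ :=
  !![cos t, sin t; -sin t, cos t]

theorem rotationMatrix_add (s t : ℝ) :
    rotationMatrix (s + t) = rotationMatrix s * rotationMatrix t := by
  rw [rotationMatrix, rotationMatrix, rotationMatrix, mul_fin_two, cos_add, sin_add]
  ext i j
  fin_cases i <;> fin_cases j <;> simp <;> ring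

theorem rotationMatrix_zero : rotationMatrix 0 = 1 := by
  simp [rotationMatrix, one_fin_two]

theorem det_rotationMatrix (t : ℝ) : (rotationMatrix t).det = 1 := by
  simp [rotationMatrix, det_fin_two, ← sq]

noncomputable instance (t : ℝ) : Invertible (rotationMatrix t) where
  invOf := rotationMatrix (-t)
  invOf_mul_self := by rw [← rotationMatrix_add, neg_add_cancel, rotationMatrix_zero]
  mul_invOf_self := by rw [← rotationMatrix_add, add_neg_cancel, rotationMatrix_zero]

theorem invOf_rotationMatrix (t : ℝ) : ⅟(rotationMatrix t) = rotationMatrix (-t) := rfl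

theorem sin_sub_mul_sin_add (x y : ℝ) : sin (x - y) * sin (x + y) = sin x ^ 2 - sin y ^ 2 := by
  rw [sin_sub, sin_add]
  linear_combination sin x ^ 2 * sin_sq_add_cos_sq y - sin y ^ 2 * sin_sq_add_cos_sq x

theorem cos_sub_mul_cos_add (x y : ℝ) : cos (x - y) * cos (x + y) = cos x ^ 2 - sin y ^ 2 := by
  rw [cos_sub, cos_add]
  linear_combination cos x ^ 2 * sin_sq_add_cos_sq y - sin y ^ 2 * sin_sq_add_cos_sq x

theorem det_diagonal_sub_rotationMatrix_mul_diagonal_mul_rotationMatrix (k u v : ℝ) :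
    (diagonal ![1, k] - rotationMatrix u * diagonal ![1, k] * rotationMatrix v).det =
      2 * k + (1 + k ^ 2) * (sin u * sin v) - 2 * k * (cos u * cos v) := by
  rw [det_fin_two]
  simp only [rotationMatrix, diagonal_fin_two, mul_fin_two, Matrix.sub_apply, of_apply,
    cons_val_zero, cons_val_one]
  linear_combination k * (sin v ^ 2 + cos v ^ 2) * sin_sq_add_cos_sq u + k * sin_sq_add_cos_sq v

theorem det_diagonal_sub_rotationMatrix_sub_mul_diagonal_mul_rotationMatrix_add (k a b : ℝ) :
    (diagonal ![1, k] - rotationMatrix (b - a) * diagonal ![1, k] * rotationMatrix (b + a)).det =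
      (k + 1) ^ 2 * sin b ^ 2 - (k - 1) ^ 2 * sin a ^ 2 := by
  rw [det_diagonal_sub_rotationMatrix_mul_diagonal_mul_rotationMatrix, sin_sub_mul_sin_add,
    cos_sub_mul_cos_add]
  linear_combination -2 * k * sin_sq_add_cos_sq b

theorem fromBlocks_eq_submatrix_cornerMatrix (k γ α : ℝ) :
    fromBlocks (diagonal ![1, k]) (-rotationMatrix (2 * π * γ))
        (diagonal ![1, k] * rotationMatrix (γ * α)) (-rotationMatrix (γ * α)) =
      (cornerMatrix k γ α).submatrix finSumFinEquiv finSumFinEquiv := by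
  ext (i | i) (j | j) <;> fin_cases i <;> fin_cases j <;>
    simp [cornerMatrix, rotationMatrix] <;> rfl

/-- `det Y(γ,α) = (k+1)²·sin²(πγ) − (k−1)²·sin²(γ(α−π))`. -/
theorem det_cornerMatrix (k γ α : ℝ) :
    (cornerMatrix k γ α).det =
      (k + 1) ^ 2 * Real.sin (Real.pi * γ) ^ 2
        - (k - 1) ^ 2 * Real.sin (γ * (α - Real.pi)) ^ 2 := by
  let _ := invertibleNeg (rotationMatrix (γ * α))
  calc (cornerMatrix k γ α).det
      = (fromBlocks (diagonal ![1, k]) (-rotationMatrix (2 * π * γ))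
          (diagonal ![1, k] * rotationMatrix (γ * α)) (-rotationMatrix (γ * α))).det := by
        rw [fromBlocks_eq_submatrix_cornerMatrix, det_submatrix_equiv_self]
    _ = (diagonal ![1, k] - rotationMatrix (2 * π * γ - γ * α) * diagonal ![1, k] *
          rotationMatrix (γ * α)).det := by
        rw [det_fromBlocks₂₂, invOf_neg, invOf_rotationMatrix, det_neg, det_rotationMatrix,
          sub_eq_add_neg (2 * π * γ), rotationMatrix_add]
        simp [Matrix.mul_assoc]
    _ = _ := by
        rw [← det_diagonal_sub_rotationMatrix_sub_mul_diagonal_mul_rotationMatrix_add,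
          show π * γ - γ * (α - π) = 2 * π * γ - γ * α by ring,
          show π * γ + γ * (α - π) = γ * α by ring]
end

section
/- Let k > 0 with k ≠ 1, set λ = |(k+1)/(k−1)|, let γ > 0 and let α ∈ (0,2π) with α ≠ π. Then the matrix Y(γ,α) is singular (i.e. det Y(γ,α) = 0) if and only if |sin(γ(α−π))| = λ·|sin(γπ)|. -/
private lemma det_fin_four' (A : Matrix (Fin 4) (Fin 4) ℝ) :
    A.det =
      A 0 0 * (A 1 1 * (A 2 2 * A 3 3 - A 2 3 * A 3 2) - A 1 2 * (A 2 1 * A 3 3 - A 2 3 * A 3 1)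
        + A 1 3 * (A 2 1 * A 3 2 - A 2 2 * A 3 1))
      - A 0 1 * (A 1 0 * (A 2 2 * A 3 3 - A 2 3 * A 3 2) - A 1 2 * (A 2 0 * A 3 3 - A 2 3 * A 3 0)
        + A 1 3 * (A 2 0 * A 3 2 - A 2 2 * A 3 0))
      + A 0 2 * (A 1 0 * (A 2 1 * A 3 3 - A 2 3 * A 3 1) - A 1 1 * (A 2 0 * A 3 3 - A 2 3 * A 3 0)
        + A 1 3 * (A 2 0 * A 3 1 - A 2 1 * A 3 0))
      - A 0 3 * (A 1 0 * (A 2 1 * A 3 2 - A 2 2 * A 3 1) - A 1 1 * (A 2 0 * A 3 2 - A 2 2 * A 3 0)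
        + A 1 2 * (A 2 0 * A 3 1 - A 2 1 * A 3 0)) := by
  rw [Matrix.det_succ_row_zero]
  simp only [Fin.sum_univ_succ, Fin.sum_univ_zero, Matrix.det_fin_three, Matrix.submatrix_apply]
  norm_num [Fin.succAbove, Fin.lt_def]
  simp only [show (Fin.succ 2 : Fin 4) = 3 from rfl,
    show Fin.castSucc (2 : Fin 3) = (2 : Fin 4) from rfl]
  ring

private lemma corner_det_eq (k γ α : ℝ) :
    (cornerMatrix k γ α).det
    = (k + 1)^2 * Real.sin (γ * Real.pi)^2 - (k - 1)^2 * Real.sin (γ * (α - Real.pi))^2 := by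
  have e1 : Real.cos (2 * Real.pi * γ) = 1 - 2 * Real.sin (γ * Real.pi) ^ 2 := by
    rw [show 2 * Real.pi * γ = 2 * (γ * Real.pi) by ring, Real.cos_two_mul,
      ← Real.sin_sq_add_cos_sq (γ * Real.pi)]; ring
  have e2 : Real.sin (2 * Real.pi * γ) = 2 * Real.sin (γ * Real.pi) * Real.cos (γ * Real.pi) := by
    rw [show 2 * Real.pi * γ = 2 * (γ * Real.pi) by ring, Real.sin_two_mul]
  have e3 : Real.sin (γ * (α - Real.pi)) =
      Real.sin (γ * α) * Real.cos (γ * Real.pi) - Real.cos (γ * α) * Real.sin (γ * Real.pi) := by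
    rw [show γ * (α - Real.pi) = γ * α - γ * Real.pi by ring, Real.sin_sub]
  rw [det_fin_four', e3]
  simp only [cornerMatrix, Matrix.cons_val', Matrix.cons_val_zero, Matrix.cons_val_one,
    Matrix.head_cons, Matrix.empty_val', Matrix.cons_val_fin_one, Matrix.head_fin_const,
    Matrix.cons_val_two, Matrix.cons_val_three, Matrix.tail_cons, Matrix.of_apply,
    Matrix.cons_val_succ]
  rw [e1, e2]
  have h1 := Real.sin_sq_add_cos_sq (γ * α)
  have h2 := Real.sin_sq_add_cos_sq (γ * Real.pi)
  set a := Real.cos (γ * α)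
  set S := Real.sin (γ * Real.pi)
  set C := Real.cos (γ * Real.pi)
  linear_combination
    (-1 + 2*k - k^2 + C^2 - 2*C^2*k + C^2*k^2 + 2*S^2 - 4*S^2*k + 2*S^2*k^2
      + 4*S^2*C^2*k + 4*S^4*k) * h1
    + (1 - 2*k + k^2 + 4*S^2*k - a^2 + 2*a^2*k - a^2*k^2) * h2

/-- for `k > 0`, `k ≠ 1`, `γ > 0`, `α ∈ (0,2π) ∖ {π}`,
the matrix `Y(γ,α)` is singular iff `|sin(γ(α−π))| = λ·|sin(γπ)|`
with `λ = |(k+1)/(k−1)|`. -/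
theorem cornerMatrix_singular_iff (k γ α : ℝ) (hk : 0 < k) (hk1 : k ≠ 1)
    (hγ : 0 < γ) (hα0 : 0 < α) (hα2 : α < 2 * Real.pi) (hαπ : α ≠ Real.pi) :
    (cornerMatrix k γ α).det = 0 ↔
      |Real.sin (γ * (α - Real.pi))| = |(k + 1) / (k - 1)| * |Real.sin (γ * Real.pi)| := by
  rw [corner_det_eq]
  have hk1' : |k - 1| ≠ 0 := abs_ne_zero.mpr (sub_ne_zero.mpr hk1)
  rw [abs_div, sub_eq_zero]
  have key : (k + 1) ^ 2 * Real.sin (γ * Real.pi) ^ 2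
      = (k - 1) ^ 2 * Real.sin (γ * (α - Real.pi)) ^ 2
      ↔ |k - 1| * |Real.sin (γ * (α - Real.pi))| = |k + 1| * |Real.sin (γ * Real.pi)| := by
    constructor
    · intro h
      apply (sq_eq_sq₀ (by positivity) (by positivity)).mp
      rw [mul_pow, mul_pow, sq_abs, sq_abs, sq_abs, sq_abs]
      linarith
    · intro h
      have h2 : (|k - 1| * |Real.sin (γ * (α - Real.pi))|) ^ 2
          = (|k + 1| * |Real.sin (γ * Real.pi)|) ^ 2 := by rw [h]
      rw [mul_pow, mul_pow, sq_abs, sq_abs, sq_abs, sq_abs] at h2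
      linarith
  rw [key]
  rw [div_mul_eq_mul_div, eq_div_iff hk1', mul_comm]
end

section
/- Let k > 0 with k ≠ 1, set λ = |(k+1)/(k−1)|, let γ > 0 and let α ∈ (0,2π) with α ≠ π. Assume |sin(γ(α−π))| = λ·|sin(γπ)|, and assume it is NOT the case that γ is an integer ≥ 2 and α = lπ/γ for some integer l with 1 ≤ l ≤ 2γ−1 and l ≠ γ. Then the matrix Y(γ,α) has rank 3. -/
open Real

namespace Matrix

lemma le_rank_of_det_submatrix_ne_zero {m n R : Type*} [CommRing R] [IsDomain R] [Fintype n]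
    {r : ℕ} (A : Matrix m n R) (f : Fin r → m) (g : Fin r → n) (h : (A.submatrix f g).det ≠ 0) : r ≤ A.rank := by
  simpa [rank_of_det_ne_zero h] using rank_submatrix_le A f g

lemma rank_lt_card_of_det_eq_zero {n K : Type*} [Field K] [Fintype n] [DecidableEq n]
    {A : Matrix n n K} (h : A.det = 0) : A.rank < Fintype.card n := by
  refine (rank_le_card_width A).lt_of_ne fun hrank => ?_
  have hsurj : Function.Surjective A.mulVec := by
    refine (LinearMap.range_eq_top (f := A.mulVecLin)).1 (Submodule.eq_top_of_finrank_eq ?_)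
    rwa [Module.finrank_fintype_fun_eq_card]
  exact (isUnit_iff_isUnit_det A).1 (mulVec_surjective_iff_isUnit.1 hsurj) |>.ne_zero h

end Matrix

lemma cornerMatrix_det (k γ α : ℝ) : (cornerMatrix k γ α).det =
    (k + 1) ^ 2 * sin (γ * π) ^ 2 - (k - 1) ^ 2 * sin (γ * (α - π)) ^ 2 := by
  rw [cornerMatrix, show 2 * π * γ = 2 * (γ * π) by ring, show γ * (α - π) = γ * α - γ * π by ring,
    sin_two_mul, cos_two_mul, sin_sub]
  simp [Matrix.det_succ_row_zero, Fin.sum_univ_succ, Fin.succAbove]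
  linear_combination
    (4 * k * cos (γ * π) ^ 2 * (sin (γ * α) ^ 2 + cos (γ * α) ^ 2) - (k + 1) ^ 2 * sin (γ * α) ^ 2
      - 4 * k * cos (γ * α) ^ 2) * sin_sq_add_cos_sq (γ * π)
    + (k + 1) ^ 2 * sin (γ * π) ^ 2 * sin_sq_add_cos_sq (γ * α)

lemma three_le_rank_cornerMatrix {k γ α : ℝ} (hk : 0 < k) (hk1 : k ≠ 1) (hs : sin (γ * π) ≠ 0) :
    3 ≤ (cornerMatrix k γ α).rank := by
  by_contra hrank
  have minor (f g : Fin 3 → Fin 4) : ((cornerMatrix k γ α).submatrix f g).det = 0 :=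
    not_not.1 fun h => hrank ((cornerMatrix k γ α).le_rank_of_det_submatrix_ne_zero f g h)
  have h00 := minor ![0, 1, 2] ![0, 1, 2]
  have h01 := minor ![0, 1, 2] ![0, 1, 3]
  have h10 := minor ![0, 1, 3] ![0, 1, 2]
  have h11 := minor ![0, 1, 3] ![0, 1, 3]
  rw [Matrix.det_fin_three] at h00 h01 h10 h11
  simp only [cornerMatrix, Matrix.submatrix_apply, Matrix.of_apply, Matrix.cons_val',
    Matrix.cons_val_fin_one, Matrix.cons_val_zero, Matrix.cons_val_one, Matrix.cons_val] at h00 h01 h10 h11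
  have hk2 : k ^ 2 - 1 ≠ 0 := by
    rw [show k ^ 2 - 1 = (k - 1) * (k + 1) by ring]
    exact mul_ne_zero (sub_ne_zero.2 hk1) (by positivity)
  have hsS : sin (2 * π * γ) * sin (γ * α) = 0 :=
    (mul_eq_zero.1 (by linear_combination h00 - h11)).resolve_left hk2
  have hcS : cos (2 * π * γ) * sin (γ * α) = 0 :=
    (mul_eq_zero.1 (by linear_combination -h01 - h10)).resolve_left hk2
  have hS : sin (γ * α) = 0 := by
    linear_combination sin (2 * π * γ) * hsS + cos (2 * π * γ) * hcS
      - sin (γ * α) * sin_sq_add_cos_sq (2 * π * γ)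
  have hc : cos (2 * π * γ) = 1 := by
    have : k * (cos (2 * π * γ) - 1) = 0 := by
      linear_combination cos (γ * α) * h00 - k * (cos (2 * π * γ) - 1) * sin_sq_add_cos_sq (γ * α)
        + (k * (cos (2 * π * γ) - 1) * sin (γ * α) + sin (2 * π * γ) * cos (γ * α)) * hS
    linarith [(mul_eq_zero.1 this).resolve_left hk.ne']
  have hcos : cos (2 * π * γ) = 2 * cos (γ * π) ^ 2 - 1 := by
    rw [← cos_two_mul]; ring_nf
  exact hs (pow_eq_zero_iff two_ne_zero |>.1 <| by
    linear_combination (-1 / 2 : ℝ) * hc + (1 / 2 : ℝ) * hcos + sin_sq_add_cos_sq (γ * π))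

lemma exists_nat_mul_pi_div_of_sin_eq_zero {γ α : ℝ} (hγ : 0 < γ) (hα0 : 0 < α) (hα2 : α < 2 * π)
    (hαπ : α ≠ π) (h1 : sin (γ * π) = 0) (h2 : sin (γ * (α - π)) = 0) :
    ∃ m : ℕ, 2 ≤ m ∧ γ = (m : ℝ) ∧
      ∃ l : ℕ, 1 ≤ l ∧ l ≤ 2 * m - 1 ∧ l ≠ m ∧ α = (l : ℝ) * π / (m : ℝ) := by
  obtain ⟨n, hn⟩ := sin_eq_zero_iff.1 h1
  obtain ⟨p, hp⟩ := sin_eq_zero_iff.1 h2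
  have hγn : γ = n := (mul_right_cancel₀ pi_ne_zero hn).symm
  lift n to ℕ using by exact_mod_cast hγn ▸ hγ.le
  rw [Int.cast_natCast] at hγn
  have hαl : γ * α = ((p + n : ℤ) : ℝ) * π := by push_cast; linear_combination -hp - hn
  have hl0 : (0 : ℝ) < (p + n : ℤ) := pos_of_mul_pos_left (hαl ▸ mul_pos hγ hα0) pi_pos.le
  lift p + n to ℕ using by exact_mod_cast hl0.le with l
  push_cast at hαl hl0
  rw [hγn] at hαl
  have hn0 : (0 : ℝ) < n := hγn ▸ hγ
  have hlt : (l : ℝ) < 2 * n := by nlinarith [pi_pos]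
  have hne : (l : ℝ) ≠ n := fun h => hαπ (by
    rw [h] at hαl; exact mul_left_cancel₀ hn0.ne' hαl)
  have hl0' : 0 < l := by exact_mod_cast hl0
  have hlt' : l < 2 * n := by exact_mod_cast hlt
  have hne' : l ≠ n := by exact_mod_cast hne
  refine ⟨n, by omega, hγn, l, by omega, by omega, hne', ?_⟩
  field_simp
  linarith

/-- for `k > 0`, `k ≠ 1`, `γ > 0`, `α ∈ (0,2π) ∖ {π}` with
`|sin(γ(α−π))| = λ·|sin(γπ)|`, if it is not the case that `γ` is an integer `≥ 2`
and `α = lπ/γ` for some integer `l` with `1 ≤ l ≤ 2γ−1`, `l ≠ γ`, then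
`rank Y(γ,α) = 3`. -/
theorem cornerMatrix_rank_three (k γ α : ℝ) (hk : 0 < k) (hk1 : k ≠ 1)
    (hγ : 0 < γ) (hα0 : 0 < α) (hα2 : α < 2 * Real.pi) (hαπ : α ≠ Real.pi)
    (heq : |Real.sin (γ * (α - Real.pi))| = |(k + 1) / (k - 1)| * |Real.sin (γ * Real.pi)|)
    (hnot : ¬ ∃ m : ℕ, 2 ≤ m ∧ γ = (m : ℝ) ∧
      ∃ l : ℕ, 1 ≤ l ∧ l ≤ 2 * m - 1 ∧ l ≠ m ∧ α = (l : ℝ) * Real.pi / (m : ℝ)) :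
    (cornerMatrix k γ α).rank = 3 := by
  have hs : sin (γ * π) ≠ 0 := fun h0 => hnot <|
    exists_nat_mul_pi_div_of_sin_eq_zero hγ hα0 hα2 hαπ h0 (by simpa [h0] using heq)
  have hdet : (cornerMatrix k γ α).det = 0 := by
    have hk1' : k - 1 ≠ 0 := sub_ne_zero.2 hk1
    have hsq := congrArg (· ^ 2) heq
    simp only [mul_pow, sq_abs, div_pow] at hsq
    rw [cornerMatrix_det, hsq]
    field_simp
    ring
  have hle := (cornerMatrix k γ α).rank_lt_card_of_det_eq_zero hdet
  have hge := three_le_rank_cornerMatrix (α := α) hk hk1 hs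
  rw [Fintype.card_fin] at hle
  omega
end

section
/- Let k > 0 with k ≠ 1, let γ be an integer with γ ≥ 2, and let α = lπ/γ for some integer l with 1 ≤ l ≤ 2γ−1 and l ≠ γ. Then the matrix Y(γ,α) has rank 2. -/
/-- for `k > 0`, `k ≠ 1`, `γ` an integer `≥ 2`, and `α = lπ/γ` with
`l` an integer, `1 ≤ l ≤ 2γ−1`, `l ≠ γ`, the matrix `Y(γ,α)` has rank 2. -/
theorem cornerMatrix_rank_two (k : ℝ) (m : ℕ) (hk : 0 < k) (hk1 : k ≠ 1)
    (hm : 2 ≤ m) (l : ℕ) (hl1 : 1 ≤ l) (hl2 : l ≤ 2 * m - 1) (hlm : l ≠ m) :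
    (cornerMatrix k (m : ℝ) ((l : ℝ) * Real.pi / (m : ℝ))).rank = 2 := by
  have hm0 : (m : ℝ) ≠ 0 := by positivity
  have hγα : (m : ℝ) * ((l : ℝ) * Real.pi / (m : ℝ)) = (l : ℝ) * Real.pi := by
    field_simp
  have h2π : (2 : ℝ) * Real.pi * (m : ℝ) = (m : ℝ) * (2 * Real.pi) := by ring
  set c : ℝ := (-1 : ℝ) ^ l with hc
  have hcos2 : Real.cos (2 * Real.pi * (m : ℝ)) = 1 := by
    rw [h2π]; exact Real.cos_nat_mul_two_pi m
  have hsin2 : Real.sin (2 * Real.pi * (m : ℝ)) = 0 := by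
    rw [h2π, mul_comm ((m:ℝ)) (2 * Real.pi)]
    have : (2 : ℝ) * Real.pi * (m : ℝ) = ((2 * m : ℕ) : ℝ) * Real.pi := by
      push_cast; ring
    rw [this]; exact Real.sin_nat_mul_pi (2 * m)
  have hcosl : Real.cos ((l : ℝ) * Real.pi) = c := by
    simpa using Real.cos_nat_mul_pi_sub 0 l
  have hsinl : Real.sin ((l : ℝ) * Real.pi) = 0 := Real.sin_nat_mul_pi l
  have hM : cornerMatrix k (m : ℝ) ((l : ℝ) * Real.pi / (m : ℝ)) =
      !![1, 0, -1, 0; 0, k, 0, -1; c, 0, -c, 0; 0, k * c, 0, -c] := by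
    unfold cornerMatrix
    rw [hγα, hcos2, hsin2, hcosl, hsinl]
    norm_num
  set A : Matrix (Fin 4) (Fin 2) ℝ := !![1, 0; 0, 1; c, 0; 0, c] with hA
  set B : Matrix (Fin 2) (Fin 4) ℝ := !![1, 0, -1, 0; 0, k, 0, -1] with hB
  have hAB : cornerMatrix k (m : ℝ) ((l : ℝ) * Real.pi / (m : ℝ)) = A * B := by
    rw [hM]
    ext i j
    fin_cases i <;> fin_cases j <;>
      simp [hA, hB, Matrix.mul_apply, Fin.sum_univ_succ] <;> ring
  have hle : (cornerMatrix k (m : ℝ) ((l : ℝ) * Real.pi / (m : ℝ))).rank ≤ 2 := by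
    rw [hAB]
    calc (A * B).rank ≤ A.rank := Matrix.rank_mul_le_left A B
    _ ≤ Fintype.card (Fin 2) := Matrix.rank_le_card_width A
    _ = 2 := by simp
  set C : Matrix (Fin 2) (Fin 4) ℝ := !![1, 0, 0, 0; 0, 1, 0, 0] with hC
  set D : Matrix (Fin 4) (Fin 2) ℝ := !![1, 0; 0, k⁻¹; 0, 0; 0, 0] with hD
  have hk0 : k ≠ 0 := ne_of_gt hk
  have hCMD : C * (cornerMatrix k (m : ℝ) ((l : ℝ) * Real.pi / (m : ℝ)) * D) =
      (1 : Matrix (Fin 2) (Fin 2) ℝ) := by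
    rw [hM]
    ext i j
    fin_cases i <;> fin_cases j <;>
      simp [hC, hD, Matrix.mul_apply, Fin.sum_univ_succ, Matrix.one_apply, hk0]
  have hge : 2 ≤ (cornerMatrix k (m : ℝ) ((l : ℝ) * Real.pi / (m : ℝ))).rank := by
    calc (2 : ℕ) = (1 : Matrix (Fin 2) (Fin 2) ℝ).rank := by
          rw [Matrix.rank_one]; simp
    _ = (C * (cornerMatrix k (m : ℝ) ((l : ℝ) * Real.pi / (m : ℝ)) * D)).rank := by
          rw [hCMD]
    _ ≤ (cornerMatrix k (m : ℝ) ((l : ℝ) * Real.pi / (m : ℝ)) * D).rank :=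
          Matrix.rank_mul_le_right _ _
    _ ≤ _ := Matrix.rank_mul_le_left _ _
  omega
end

section
/- Let k ≠ 0 be real and let γ, α be real. Then the 2×2 matrix identity D·R(γα)·D⁻¹·R(2πγ) − R(γα) = D·R(γπ)·( R(γ(α−π))·D⁻¹·R(γπ) − R(−γπ)·D⁻¹·R(γ(α−π)) )·R(γπ) holds. -/
/-- The 2×2 rotation-type matrix `R(ω)` with rows `(cos ω, sin ω)` and `(−sin ω, cos ω)`. -/
noncomputable def rotMat (ω : ℝ) : Matrix (Fin 2) (Fin 2) ℝ :=
  !![Real.cos ω, Real.sin ω; -Real.sin ω, Real.cos ω]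

/-- The diagonal matrix `D = diag(1, k)`. -/
def diagMat (k : ℝ) : Matrix (Fin 2) (Fin 2) ℝ := !![1, 0; 0, k]

lemma rotMat_mul (x y : ℝ) : rotMat x * rotMat y = rotMat (x + y) := by
  ext i j
  fin_cases i <;> fin_cases j <;>
    · simp [rotMat, Matrix.mul_apply, Fin.sum_univ_succ, Real.cos_add, Real.sin_add]
      ring

lemma rotMat_zero : rotMat 0 = 1 := by
  ext i j
  fin_cases i <;> fin_cases j <;> simp [rotMat, Matrix.one_apply]

lemma diagMat_mul_inv (k : ℝ) (hk : k ≠ 0) : diagMat k * (diagMat k)⁻¹ = 1 := by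
  apply Matrix.mul_nonsing_inv
  simp [diagMat, Matrix.det_fin_two_of, hk]

/-- for `k ≠ 0` and real `γ, α`, the identity
`D·R(γα)·D⁻¹·R(2πγ) − R(γα)
  = D·R(γπ)·(R(γ(α−π))·D⁻¹·R(γπ) − R(−γπ)·D⁻¹·R(γ(α−π)))·R(γπ)` holds. -/
theorem schur_factorization (k γ α : ℝ) (hk : k ≠ 0) :
    diagMat k * rotMat (γ * α) * (diagMat k)⁻¹ * rotMat (2 * Real.pi * γ)
        - rotMat (γ * α)
      = diagMat k * rotMat (γ * Real.pi) *
          (rotMat (γ * (α - Real.pi)) * (diagMat k)⁻¹ * rotMat (γ * Real.pi)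
            - rotMat (-(γ * Real.pi)) * (diagMat k)⁻¹ * rotMat (γ * (α - Real.pi))) *
          rotMat (γ * Real.pi) := by
  set a := γ * Real.pi with ha
  set c := γ * (α - Real.pi) with hc
  set Di := (diagMat k)⁻¹ with hDi
  rw [Matrix.mul_sub, Matrix.sub_mul]
  have t1 : diagMat k * rotMat a * (rotMat c * Di * rotMat a) * rotMat a
      = diagMat k * (rotMat a * rotMat c) * Di * (rotMat a * rotMat a) := by
    simp only [Matrix.mul_assoc]
  have t2 : diagMat k * rotMat a * (rotMat (-a) * Di * rotMat c) * rotMat a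
      = diagMat k * (rotMat a * rotMat (-a)) * Di * (rotMat c * rotMat a) := by
    simp only [Matrix.mul_assoc]
  rw [t1, t2, rotMat_mul, rotMat_mul, rotMat_mul, rotMat_mul, add_neg_cancel, rotMat_zero,
    Matrix.mul_one, hDi, diagMat_mul_inv k hk, Matrix.one_mul]
  have h1 : a + c = γ * α := by rw [ha, hc]; ring
  have h2 : a + a = 2 * Real.pi * γ := by rw [ha]; ring
  have h3 : c + a = γ * α := by rw [ha, hc]; ring
  rw [h1, h2, h3]
end

section
/- Let k ≠ 0 be real and let γ, α be real. Then the determinant of the Schur complement S = D·R(γα)·D⁻¹·R(2πγ) − R(γα) equals ( (k+1)²·sin²(πγ) − (k−1)²·sin²(γ(α−π)) ) / k. -/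
/-!
Expanding the 2×2 determinant and using `sin² + cos² = 1`, one finds
`det (D R(a) D⁻¹ R(b) - R(a)) = 2 - ((k+1)² cos b - (k-1)² cos (2a - b)) / (2k)`.
With `a = γα`, `b = 2πγ`, the half-angle formula `sin² x = (1 - cos 2x) / 2` turns this into
the stated form.
-/

open Real Matrix

lemma diagMat_inv {k : ℝ} (hk : k ≠ 0) : (diagMat k)⁻¹ = diagMat k⁻¹ :=
  inv_eq_right_inv <| by simp [diagMat, one_fin_two, hk]

lemma det_diagMat_conj_rotMat_mul_rotMat_sub_rotMat {k : ℝ} (hk : k ≠ 0) (a b : ℝ) :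
    (diagMat k * rotMat a * diagMat k⁻¹ * rotMat b - rotMat a).det
      = 2 - ((k + 1) ^ 2 * cos b - (k - 1) ^ 2 * cos (2 * a - b)) / (2 * k) := by
  rw [cos_sub, cos_two_mul, sin_two_mul]
  simp [rotMat, diagMat, det_fin_two]
  field_simp
  linear_combination (2 * k * (sin b ^ 2 + cos b ^ 2 + 1) - 2 * (1 + k ^ 2) * cos b)
      * sin_sq_add_cos_sq a + 2 * k * sin_sq_add_cos_sq b

/-- for `k ≠ 0` and real `γ, α`, the determinant of the Schur
complement `S = D·R(γα)·D⁻¹·R(2πγ) − R(γα)` equals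
`((k+1)²·sin²(πγ) − (k−1)²·sin²(γ(α−π)))/k`. -/
theorem det_schurComplement (k γ α : ℝ) (hk : k ≠ 0) :
    (diagMat k * rotMat (γ * α) * (diagMat k)⁻¹ * rotMat (2 * Real.pi * γ)
        - rotMat (γ * α)).det
      = ((k + 1) ^ 2 * Real.sin (Real.pi * γ) ^ 2
          - (k - 1) ^ 2 * Real.sin (γ * (α - Real.pi)) ^ 2) / k := by
  have hb : 2 * (π * γ) = 2 * π * γ := by ring
  have hab : 2 * (γ * (α - π)) = 2 * (γ * α) - 2 * π * γ := by ring
  rw [diagMat_inv hk, det_diagMat_conj_rotMat_mul_rotMat_sub_rotMat hk, sin_sq_eq_half_sub,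
    sin_sq_eq_half_sub, hb, hab]
  field_simp
  ring
end

section
/- Let k > 0 with k ≠ 1, set λ = |(k+1)/(k−1)|, and let α ∈ (0,2π) with α ≠ π. Then every γ ∈ (0,1] satisfying |sin(γ(α−π))| = λ·|sin(γπ)| lies in the open interval (1/2, 1). -/
/-- for `k > 0`, `k ≠ 1`, `λ = |(k+1)/(k−1)|` and
`α ∈ (0,2π) ∖ {π}`, every `γ ∈ (0,1]` with `|sin(γ(α−π))| = λ·|sin(γπ)|`
lies in the open interval `(1/2, 1)`. -/
theorem singular_exponent_mem_Ioo (k α : ℝ) (hk : 0 < k) (hk1 : k ≠ 1)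
    (hα0 : 0 < α) (hα2 : α < 2 * Real.pi) (hαπ : α ≠ Real.pi) :
    ∀ γ : ℝ, 0 < γ → γ ≤ 1 →
      |Real.sin (γ * (α - Real.pi))| = |(k + 1) / (k - 1)| * |Real.sin (γ * Real.pi)| →
      1 / 2 < γ ∧ γ < 1 := by
  intro γ hγ0 hγ1 heq
  have hπ := Real.pi_pos
  have hlam : 1 < |(k + 1) / (k - 1)| := by
    rw [abs_div, lt_div_iff₀ (abs_pos.mpr (sub_ne_zero.mpr hk1)), one_mul]
    rcases lt_or_gt_of_ne hk1 with h | h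
    · rw [abs_of_neg (by linarith : k - 1 < 0), abs_of_pos (by linarith : (0:ℝ) < k + 1)]
      linarith
    · rw [abs_of_pos (by linarith : (0:ℝ) < k - 1), abs_of_pos (by linarith : (0:ℝ) < k + 1)]
      linarith
  have hαlt : |α - Real.pi| < Real.pi := abs_lt.mpr ⟨by linarith, by linarith⟩
  have hγlt : γ < 1 := by
    rcases lt_or_eq_of_le hγ1 with h | h
    · exact h
    · exfalso
      subst h
      rw [one_mul, one_mul, Real.sin_pi, abs_zero, mul_zero, abs_eq_zero] at heq
      rcases Real.sin_eq_zero_iff.mp heq with ⟨n, hn⟩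
      have hn1 : (n : ℝ) * Real.pi < Real.pi := by rw [hn]; linarith
      have hn2 : -Real.pi < (n : ℝ) * Real.pi := by rw [hn]; linarith
      have h1 : (n : ℝ) < 1 := by
        by_contra h
        push_neg at h
        nlinarith
      have h2 : (-1 : ℝ) < (n : ℝ) := by
        by_contra h
        push_neg at h
        nlinarith
      have : n = 0 := by
        have h1' : n < 1 := by exact_mod_cast h1
        have h2' : (-1 : ℤ) < n := by exact_mod_cast h2
        omega
      subst this
      simp at hn
      exact hαπ (by linarith)
  refine ⟨?_, hγlt⟩
  by_contra h
  push_neg at h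
  -- γ ≤ 1/2
  have hsinpos : 0 < Real.sin (γ * Real.pi) := by
    apply Real.sin_pos_of_pos_of_lt_pi
    · positivity
    · nlinarith
  have habs : |γ * (α - Real.pi)| < γ * Real.pi := by
    rw [abs_mul, abs_of_pos hγ0]
    exact (mul_lt_mul_iff_right₀ hγ0).mpr hαlt
  have hle2 : γ * Real.pi ≤ Real.pi / 2 := by nlinarith
  -- |sin x| = sin |x| for |x| ≤ π
  have hsinabs : |Real.sin (γ * (α - Real.pi))| = Real.sin |γ * (α - Real.pi)| := by
    rcases le_or_gt 0 (γ * (α - Real.pi)) with hx | hx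
    · rw [abs_of_nonneg hx, abs_of_nonneg]
      exact Real.sin_nonneg_of_nonneg_of_le_pi hx (by nlinarith)
    · rw [abs_of_neg hx, Real.sin_neg, abs_of_nonpos]
      apply Real.sin_nonpos_of_nonpos_of_neg_pi_le
      · linarith
      · have := neg_abs_le (γ * (α - Real.pi))
        linarith
  have hmono : Real.sin |γ * (α - Real.pi)| < Real.sin (γ * Real.pi) := by
    apply Real.strictMonoOn_sin ?_ ?_ habs
    · constructor
      · have := abs_nonneg (γ * (α - Real.pi)); linarith
      · linarith
    · constructor
      · have := mul_pos hγ0 hπ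
        linarith
      · linarith
  rw [hsinabs, abs_of_pos hsinpos] at heq
  nlinarith
end

section
/- Let k > 0 with k ≠ 1, set λ = |(k+1)/(k−1)|, and let α ∈ (0,2π) with α ≠ π. Then there exists γ ∈ (1/2, 1) with |sin(γ(α−π))| = λ·sin(γπ). -/
/-- for `k > 0`, `k ≠ 1`, `λ = |(k+1)/(k−1)|` and
`α ∈ (0,2π) ∖ {π}`, there exists `γ ∈ (1/2, 1)` with
`|sin(γ(α−π))| = λ·sin(γπ)`. -/
theorem exists_singular_exponent (k α : ℝ) (hk : 0 < k) (hk1 : k ≠ 1)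
    (hα0 : 0 < α) (hα2 : α < 2 * Real.pi) (hαπ : α ≠ Real.pi) :
    ∃ γ : ℝ, 1 / 2 < γ ∧ γ < 1 ∧
      |Real.sin (γ * (α - Real.pi))| = |(k + 1) / (k - 1)| * Real.sin (γ * Real.pi) := by
  set lam := |(k + 1) / (k - 1)| with hlamdef
  have hk1' : k - 1 ≠ 0 := sub_ne_zero.mpr hk1
  have hlam1 : 1 < lam := by
    rw [hlamdef, abs_div, lt_div_iff₀ (abs_pos.mpr hk1')]
    rw [abs_of_pos (by linarith : (0:ℝ) < k + 1)]
    rcases abs_cases (k - 1) with ⟨h, _⟩ | ⟨h, _⟩ <;> rw [h] <;> linarith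
  set f : ℝ → ℝ := fun γ => |Real.sin (γ * (α - Real.pi))| - lam * Real.sin (γ * Real.pi)
    with hfdef
  have hcont : ContinuousOn f (Set.Icc (1/2 : ℝ) 1) := by
    apply Continuous.continuousOn
    fun_prop
  have hf12 : f (1/2) < 0 := by
    have h1 : (1/2 : ℝ) * Real.pi = Real.pi / 2 := by ring
    have h2 : |Real.sin ((1/2 : ℝ) * (α - Real.pi))| ≤ 1 := Real.abs_sin_le_one _
    simp only [hfdef, h1, Real.sin_pi_div_two, mul_one]
    linarith
  have hf1 : 0 < f 1 := by
    have hne : Real.sin (α - Real.pi) ≠ 0 := by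
      rcases lt_or_gt_of_ne hαπ with h | h
      · have : Real.sin (α - Real.pi) = -Real.sin α := by
          rw [show α - Real.pi = -(Real.pi - α) by ring, Real.sin_neg, Real.sin_pi_sub]
        rw [this]
        have := Real.sin_pos_of_pos_of_lt_pi hα0 h
        linarith
      · have := Real.sin_pos_of_pos_of_lt_pi (by linarith : 0 < α - Real.pi)
          (by linarith : α - Real.pi < Real.pi)
        linarith
    simp only [hfdef, one_mul, Real.sin_pi, mul_zero, sub_zero]
    exact abs_pos.mpr hne
  have h0mem : (0:ℝ) ∈ Set.Ioo (f (1/2)) (f 1) := ⟨hf12, hf1⟩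
  obtain ⟨γ, hγmem, hγ⟩ := intermediate_value_Ioo (by norm_num : (1/2:ℝ) ≤ 1) hcont h0mem
  refine ⟨γ, hγmem.1, hγmem.2, ?_⟩
  have : |Real.sin (γ * (α - Real.pi))| - lam * Real.sin (γ * Real.pi) = 0 := hγ
  linarith
end

section
/- Let k > 0 with k ≠ 1 and let α ∈ (0,2π) with α ≠ π. Then for every real γ with 0 < |γ| ≤ 1/2 the matrix Y(γ,α) is invertible, i.e. det Y(γ,α) ≠ 0. (This is the fact used to solve uniquely the linear system determining the singular part of the shape derivative, where γ = γ₁ − 1 ∈ (−1/2, 0).) -/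
open Real

theorem cornerMatrix_det_eq (k γ α : ℝ) :
    (cornerMatrix k γ α).det =
      (k + 1) ^ 2 * sin (π * γ) ^ 2 - (k - 1) ^ 2 * sin (γ * (α - π)) ^ 2 := by
  have hθ : 2 * (π * γ) = 2 * π * γ := by ring
  have hψ : 2 * (γ * (α - π)) = 2 * (γ * α) - 2 * π * γ := by ring
  rw [sin_sq_eq_half_sub, sin_sq_eq_half_sub, hθ, hψ, cos_sub, cos_two_mul, sin_two_mul,
    cornerMatrix, Matrix.det_succ_row_zero]
  simp [Fin.sum_univ_succ, Matrix.det_fin_three, Fin.succAbove]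
  linear_combination (k * (cos (2 * π * γ) - 1) ^ 2 + k * sin (2 * π * γ) ^ 2
      - (k - 1) ^ 2 * cos (2 * π * γ)) * sin_sq_add_cos_sq (γ * α)
    + k * sin_sq_add_cos_sq (2 * π * γ)

theorem sin_sq_le_sin_sq_of_abs_le {x y : ℝ} (hxy : |x| ≤ |y|) (hy : |y| ≤ π / 2) :
    sin x ^ 2 ≤ sin y ^ 2 := by
  have hcos : cos |y| ≤ cos |x| :=
    cos_le_cos_of_nonneg_of_le_pi (abs_nonneg x) (by linarith [pi_pos]) hxy
  have hcos_nonneg : 0 ≤ cos |y| :=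
    cos_nonneg_of_mem_Icc ⟨by linarith [abs_nonneg y], hy⟩
  simp only [cos_abs] at hcos hcos_nonneg
  rw [sin_sq, sin_sq]
  linarith [pow_le_pow_left₀ hcos_nonneg hcos 2]

theorem sin_sq_pos_of_abs_lt_pi {x : ℝ} (hx0 : x ≠ 0) (hx : |x| < π) : 0 < sin x ^ 2 := by
  obtain ⟨hlo, hhi⟩ := abs_lt.mp hx
  exact sq_pos_of_ne_zero ((sin_eq_zero_iff_of_lt_of_lt hlo hhi).not.mpr hx0)

theorem cornerMatrix_det_ne_zero_general (k α : ℝ) (hk : 0 < k)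
    (hα0 : 0 < α) (hα2 : α < 2 * Real.pi) :
    ∀ γ : ℝ, 0 < |γ| → |γ| ≤ 1 / 2 → (cornerMatrix k γ α).det ≠ 0 := by
  intro γ hγ0 hγ
  have hπγ : |π * γ| ≤ π / 2 := by
    rw [abs_mul, abs_of_pos pi_pos]
    nlinarith [pi_pos]
  have hshift : |γ * (α - π)| ≤ |π * γ| := by
    rw [abs_mul, abs_mul, abs_of_pos pi_pos, mul_comm π]
    exact mul_le_mul_of_nonneg_left (abs_le.mpr ⟨by linarith, by linarith⟩) hγ0.le
  have hle := sin_sq_le_sin_sq_of_abs_le hshift hπγ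
  have hpos : 0 < sin (π * γ) ^ 2 :=
    sin_sq_pos_of_abs_lt_pi (mul_ne_zero pi_ne_zero (abs_pos.mp hγ0))
      (hπγ.trans_lt (half_lt_self pi_pos))
  have hk' : (k - 1) ^ 2 < (k + 1) ^ 2 := by nlinarith
  rw [cornerMatrix_det_eq]
  nlinarith

/-- for `k > 0`, `k ≠ 1`, `α ∈ (0,2π) ∖ {π}` and every real `γ`
with `0 < |γ| ≤ 1/2`, the matrix `Y(γ,α)` is invertible, i.e. `det Y(γ,α) ≠ 0`. -/
theorem cornerMatrix_det_ne_zero (k α : ℝ) (hk : 0 < k) (hk1 : k ≠ 1)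
    (hα0 : 0 < α) (hα2 : α < 2 * Real.pi) (hαπ : α ≠ Real.pi) :
    ∀ γ : ℝ, 0 < |γ| → |γ| ≤ 1 / 2 → (cornerMatrix k γ α).det ≠ 0 :=
  cornerMatrix_det_ne_zero_general k α hk hα0 hα2
end
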